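/- arXiv:1108.1002 — 3 statements merged into one kernel-verified Lean document; each statement's English description precedes it below -/
import Mathlib

section
/- For a sequence x with x_n → 0, the following are equivalent: (i) ε·#{n : |x_n| > ε} → 0 as ε → 0⁺; (ii) n·x*_n → 0 as n → ∞, where (x*_n) is the non-increasing rearrangement of (|x_n|). -/
open Set Filter Topology ENNReal

private lemma down_closed_eq_Iio {S : Set ℕ} (hfin : S.Finite)
    (hdc : ∀ m n, m ≤ n → n ∈ S → m ∈ S) : S = Set.Iio S.ncard := by
  ext n
  simp only [Set.mem_Iio]
  constructor
  · intro hn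
    have hsub : Set.Iic n ⊆ S := fun m hm => hdc m n hm hn
    have h1 : (Set.Iic n).ncard ≤ S.ncard := Set.ncard_le_ncard hsub hfin
    have h2 : (Set.Iic n).ncard = n + 1 := by
      rw [← Finset.coe_Iic, Set.ncard_coe_finset, Nat.card_Iic]
    omega
  · intro hn
    by_contra hns
    have hsub : S ⊆ Set.Iio n := by
      intro m hm
      by_contra hmn
      simp only [Set.mem_Iio, not_lt] at hmn
      exact hns (hdc n m hmn hm)
    have h1 : S.ncard ≤ (Set.Iio n).ncard := Set.ncard_le_ncard hsub (Set.finite_Iio n)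
    have h2 : (Set.Iio n).ncard = n := by
      rw [← Finset.coe_Iio, Set.ncard_coe_finset, Nat.card_Iio]
    omega

/-- For a sequence `x` tending to `0`, with `a` the non-increasing rearrangement of `(|x_n|)`
(characterized by equidistribution with `|x|`), the following are equivalent:
(i) `ε·#{n : |x_n| > ε} → 0` as `ε → 0⁺`;  (ii) `n·a_n → 0` as `n → ∞`. -/
theorem weakL1circ_iff (x a : ℕ → ℝ)
    (hx : Tendsto x atTop (nhds (0 : ℝ)))
    (ha_nonneg : ∀ n, 0 ≤ a n) (ha_mono : Antitone a)
    (ha_lim : Tendsto a atTop (nhds (0 : ℝ)))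
    (hrearr : ∀ ε : ℝ, 0 < ε →
      {n : ℕ | ε < |x n|}.encard = {n : ℕ | ε < a n}.encard) :
    Tendsto (fun ε : ℝ => ENNReal.ofReal ε * ({n : ℕ | ε < |x n|}.encard : ℝ≥0∞))
        (nhdsWithin 0 (Set.Ioi 0)) (nhds 0) ↔
      Tendsto (fun n : ℕ => (n : ℝ) * a n) atTop (nhds (0 : ℝ)) := by
  -- the level sets of `a` are finite
  have hfin : ∀ ε : ℝ, 0 < ε → {n : ℕ | ε < a n}.Finite := by
    intro ε hε
    obtain ⟨M, hM⟩ := Filter.eventually_atTop.mp (ha_lim.eventually_lt_const hε)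
    refine (Set.finite_Iio M).subset fun n hn => ?_
    simp only [Set.mem_Iio]
    by_contra h
    push_neg at h
    exact lt_asymm hn (hM n h)
  set N : ℝ → ℕ := fun ε => {n : ℕ | ε < a n}.ncard with hN
  have hIio : ∀ ε : ℝ, 0 < ε → {n : ℕ | ε < a n} = Set.Iio (N ε) := fun ε hε =>
    down_closed_eq_Iio (hfin ε hε) (fun m n hmn hn => lt_of_lt_of_le hn (ha_mono hmn))
  have hen : ∀ ε : ℝ, 0 < ε → {n : ℕ | ε < a n}.encard = (N ε : ℕ∞) := by
    intro ε hε
    rw [hIio ε hε, ← Finset.coe_Iio, Set.encard_coe_eq_coe_finsetCard, Nat.card_Iio]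
  have hxen : ∀ ε : ℝ, 0 < ε → {n : ℕ | ε < |x n|}.encard = (N ε : ℕ∞) :=
    fun ε hε => (hrearr ε hε).trans (hen ε hε)
  have hfeq : (fun ε : ℝ => ENNReal.ofReal ε * ({n : ℕ | ε < |x n|}.encard : ℝ≥0∞))
      =ᶠ[𝓝[>] (0:ℝ)] (fun ε : ℝ => ENNReal.ofReal (ε * N ε)) := by
    filter_upwards [self_mem_nhdsWithin] with ε hε
    have hε' : (0:ℝ) < ε := hε
    rw [hxen ε hε']
    rw [show (((N ε : ℕ∞)) : ℝ≥0∞) = ((N ε : ℕ) : ℝ≥0∞) by exact_mod_cast rfl]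
    rw [ENNReal.ofReal_mul hε'.le, ENNReal.ofReal_natCast]
  rw [tendsto_congr' hfeq]
  constructor
  · -- (i) ⇒ (ii)
    intro h
    refine NormedAddCommGroup.tendsto_nhds_zero.mpr fun δ hδ => ?_
    have hE : ∀ᶠ ε in 𝓝[>] (0:ℝ), ENNReal.ofReal (ε * N ε) ≤ ENNReal.ofReal (δ/4) :=
      ENNReal.tendsto_nhds_zero.mp h _ (ENNReal.ofReal_pos.mpr (by linarith))
    obtain ⟨η, hη, hIoo⟩ := mem_nhdsGT_iff_exists_Ioo_subset.mp hE
    filter_upwards [ha_lim.eventually_lt_const hη] with n hn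
    rcases le_or_gt (a n) 0 with ha0 | ha0
    · have : a n = 0 := le_antisymm ha0 (ha_nonneg n)
      simp [this, hδ]
    · set ε := a n / 2 with hεdef
      have hε0 : 0 < ε := by positivity
      have hεη : ε ∈ Ioo (0:ℝ) η := ⟨hε0, by simp only [hεdef]; linarith⟩
      have hkey : ε * N ε ≤ δ/4 := by
        have h' := hIoo hεη
        simp only [Set.mem_setOf_eq] at h'
        rwa [ENNReal.ofReal_le_ofReal_iff (by linarith)] at h'
      have hsub : Set.Iic n ⊆ {k : ℕ | ε < a k} := by
        intro k hk
        have : a n ≤ a k := ha_mono hk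
        simp only [Set.mem_setOf_eq, hεdef]
        linarith
      have hncard : n + 1 ≤ N ε := by
        have h1 := Set.ncard_le_ncard hsub (hfin ε hε0)
        have h2 : (Set.Iic n).ncard = n + 1 := by
          rw [← Finset.coe_Iic, Set.ncard_coe_finset, Nat.card_Iic]
        have h3 : {k : ℕ | ε < a k}.ncard = N ε := rfl
        omega
      have hnN : (n : ℝ) ≤ (N ε : ℝ) := by exact_mod_cast Nat.le_of_succ_le hncard
      have h1 : (n : ℝ) * ε ≤ ε * N ε := by nlinarith [Nat.cast_nonneg (α := ℝ) n]
      rw [Real.norm_eq_abs, abs_of_nonneg (mul_nonneg (Nat.cast_nonneg n) (ha_nonneg n))]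
      have : (n : ℝ) * a n = 2 * ((n : ℝ) * ε) := by rw [hεdef]; ring
      linarith
  · -- (ii) ⇒ (i)
    intro h
    refine ENNReal.tendsto_nhds_zero.mpr fun E hE => ?_
    set c : ℝ≥0∞ := min E 1 with hcdef
    have hc0 : 0 < c := lt_min hE zero_lt_one
    have hcT : c ≠ ⊤ := ne_top_of_le_ne_top ENNReal.one_ne_top (min_le_right _ _)
    set δ : ℝ := c.toReal with hδdef
    have hδ0 : 0 < δ := ENNReal.toReal_pos hc0.ne' hcT
    obtain ⟨M, hM⟩ := Filter.eventually_atTop.mp (h.eventually_lt_const (by linarith : (0:ℝ) < δ/2))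
    set η : ℝ := min (δ/2) (δ / (2 * (M+1))) with hηdef
    have hη0 : 0 < η := by
      apply lt_min (by linarith)
      positivity
    filter_upwards [Ioo_mem_nhdsGT_of_mem ⟨le_refl (0:ℝ), hη0⟩] with ε hε
    obtain ⟨hε0, hεη⟩ := hε
    have hεδ2 : ε < δ/2 := lt_of_lt_of_le hεη (min_le_left _ _)
    -- main bound : ε * N ε ≤ δ
    have hbound : ε * N ε ≤ δ := by
      rcases le_or_gt (N ε) (M + 1) with hNM | hNM
      · have hNM' : (N ε : ℝ) ≤ (M : ℝ) + 1 := by exact_mod_cast hNM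
        have hεM : ε ≤ δ / (2 * (M+1)) := le_of_lt (lt_of_lt_of_le hεη (min_le_right _ _))
        have hMpos : (0:ℝ) < 2 * ((M:ℝ)+1) := by positivity
        have : ε * N ε ≤ ε * ((M:ℝ)+1) :=
          mul_le_mul_of_nonneg_left hNM' hε0.le
        have h2 : ε * ((M:ℝ)+1) ≤ (δ / (2 * (M+1))) * ((M:ℝ)+1) :=
          mul_le_mul_of_nonneg_right hεM (by positivity)
        have h3 : (δ / (2 * ((M:ℝ)+1))) * ((M:ℝ)+1) = δ/2 := by
          field_simp
        push_cast at h2 h3 ⊢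
        linarith
      · set K := N ε - 1 with hKdef
        have hKmem : K ∈ {n : ℕ | ε < a n} := by
          rw [hIio ε hε0]
          simp only [Set.mem_Iio]
          omega
        have hKa : ε < a K := hKmem
        have hKM : M ≤ K := by omega
        have h2 : (K : ℝ) * a K < δ/2 := hM K hKM
        have hεK : ε * K ≤ (K : ℝ) * a K := by
          nlinarith [Nat.cast_nonneg (α := ℝ) K]
        have hcast : (N ε : ℝ) = (K : ℝ) + 1 := by
          have : N ε = K + 1 := by omega
          rw [this]; push_cast; ring
        rw [hcast]
        nlinarith
    calc ENNReal.ofReal (ε * N ε) ≤ ENNReal.ofReal δ := ENNReal.ofReal_le_ofReal hbound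
      _ = c := ENNReal.ofReal_toReal hcT
      _ ≤ E := min_le_left _ _
end

section
/- The functionals Δ₁ and δ₁ are unchanged by modifying finitely many terms: if sequences x and y (both tending to 0) differ in only finitely many entries, then limsup_n n·x*_n = limsup_n n·y*_n and liminf_n n·x*_n = liminf_n n·y*_n. -/
/-!
Let `k` be the number of indices where `x` and `y` differ. For every `ε > 0` the level sets
`{n | ε < a n}` and `{n | ε < b n}` of the rearrangements then differ in size by at most `k`,
which for antitone sequences means `a (n + k) ≤ b n` and `b (n + k) ≤ a n`. Hence
`(n + k + 1) a (n + k) ≤ (n + k + 1)/(n + 1) · (n + 1) b n`, and since the factor tends to `1`,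
the limsup and liminf of `(n + 1) a n` are at most those of `(n + 1) b n`, and symmetrically.
-/

open Set Filter Topology ENNReal

theorem encard_setOf_le_encard_add_of_eqOn_compl {α β : Type*} {f g : α → β} {s : Set α}
    (hfg : EqOn f g sᶜ) (p : β → Prop) :
    {n | p (f n)}.encard ≤ {n | p (g n)}.encard + s.encard :=
  calc {n | p (f n)}.encard ≤ ({n | p (g n)} ∪ s).encard :=
        encard_le_encard fun n hn => by
          by_cases hns : n ∈ s
          · exact .inr hns
          · exact .inl (by simpa [hfg hns] using hn)
    _ ≤ _ := encard_union_le _ _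

namespace Antitone

section LevelSets

variable {α : Type*} [Preorder α] {a : ℕ → α} {ε : α} {m : ℕ}

theorem add_one_le_encard_setOf_lt (ha : Antitone a) (h : ε < a m) :
    ((m + 1 : ℕ) : ℕ∞) ≤ {n | ε < a n}.encard :=
  calc ((m + 1 : ℕ) : ℕ∞) = (Iic m).encard := by
        rw [← Finset.coe_Iic, encard_coe_eq_coe_finsetCard, Nat.card_Iic]
    _ ≤ _ := encard_le_encard fun n hn => h.trans_le (ha hn)

theorem encard_setOf_lt_le (ha : Antitone a) (h : a m ≤ ε) :
    {n | ε < a n}.encard ≤ m :=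
  calc {n | ε < a n}.encard ≤ (Iio m).encard :=
        encard_le_encard fun n hn => lt_of_not_ge fun hmn => ((ha hmn).trans h).not_gt hn
    _ = m := by rw [← Finset.coe_Iio, encard_coe_eq_coe_finsetCard, Nat.card_Iio]

end LevelSets

theorem le_of_encard_setOf_lt_le_add {a b : ℕ → ℝ} {k : ℕ} (ha : Antitone a)
    (hb : Antitone b) (hb_nonneg : ∀ n, 0 ≤ b n)
    (hcount : ∀ ε : ℝ, 0 < ε → {n | ε < a n}.encard ≤ {n | ε < b n}.encard + k)
    (n : ℕ) :
    a (n + k) ≤ b n := by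
  by_contra! h
  obtain ⟨ε, hbε, hεa⟩ := exists_between h
  have : ((n + k + 1 : ℕ) : ℕ∞) ≤ n + k :=
    calc ((n + k + 1 : ℕ) : ℕ∞) ≤ {m | ε < a m}.encard :=
          ha.add_one_le_encard_setOf_lt hεa
      _ ≤ {m | ε < b m}.encard + k := hcount ε ((hb_nonneg n).trans_lt hbε)
      _ ≤ n + k := by gcongr; exact hb.encard_setOf_lt_le hbε.le
  norm_cast at this
  omega

end Antitone

theorem tendsto_natCast_add_div_natCast_add_one (k : ℕ) :
    Tendsto (fun n : ℕ => (n + k + 1 : ℝ≥0∞) / (n + 1)) atTop (𝓝 1) := by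
  have hdiv : Tendsto (fun n : ℕ => (k : ℝ≥0∞) / (n + 1)) atTop (𝓝 0) := by
    simpa using ENNReal.Tendsto.const_div
      (ENNReal.tendsto_nat_nhds_top.comp (tendsto_add_atTop_nat 1)) (.inr (natCast_ne_top k))
  have hsplit (n : ℕ) : (n + k + 1 : ℝ≥0∞) / (n + 1) = 1 + k / (n + 1) := by
    rw [add_right_comm, ENNReal.add_div, ENNReal.div_self (by simp) (by simp)]
  simpa [hsplit] using hdiv.const_add 1

section ShiftMul

variable {u v c : ℕ → ℝ≥0∞} {k : ℕ}

theorem limsup_le_limsup_of_shift_le_mul (hc : Tendsto c atTop (𝓝 1))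
    (h : ∀ n, u (n + k) ≤ c n * v n) : limsup u atTop ≤ limsup v atTop :=
  calc limsup u atTop = limsup (fun n => u (n + k)) atTop := (limsup_nat_add u k).symm
    _ ≤ limsup (c * v) atTop := limsup_le_limsup (.of_forall h)
    _ ≤ limsup c atTop * limsup v atTop :=
        ENNReal.limsup_mul_le' (by simp [hc.limsup_eq]) (by simp [hc.limsup_eq])
    _ = limsup v atTop := by rw [hc.limsup_eq, one_mul]

theorem liminf_le_liminf_of_shift_le_mul (hc : Tendsto c atTop (𝓝 1))
    (h : ∀ n, u (n + k) ≤ c n * v n) : liminf u atTop ≤ liminf v atTop :=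
  calc liminf u atTop = liminf (fun n => u (n + k)) atTop := (liminf_nat_add u k).symm
    _ ≤ liminf (c * v) atTop := liminf_le_liminf (.of_forall h)
    _ ≤ limsup c atTop * liminf v atTop :=
        ENNReal.liminf_mul_le (by simp [hc.limsup_eq]) (by simp [hc.limsup_eq])
    _ = liminf v atTop := by rw [hc.limsup_eq, one_mul]

end ShiftMul

theorem natWeight_shift_le {a b : ℕ → ℝ} {k n : ℕ} (h : a (n + k) ≤ b n) :
    (((n + k : ℕ) : ℝ≥0∞) + 1) * ENNReal.ofReal (a (n + k)) ≤
      (n + k + 1) / (n + 1) * ((n + 1) * ENNReal.ofReal (b n)) := by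
  rw [← mul_assoc, ENNReal.div_mul_cancel (by simp) (by simp)]
  push_cast
  gcongr

theorem limsup_liminf_natWeight_le_of_shift_le {a b : ℕ → ℝ} (k : ℕ)
    (h : ∀ n, a (n + k) ≤ b n) :
    limsup (fun n : ℕ => ((n : ℝ≥0∞) + 1) * ENNReal.ofReal (a n)) atTop ≤
        limsup (fun n : ℕ => ((n : ℝ≥0∞) + 1) * ENNReal.ofReal (b n)) atTop ∧
      liminf (fun n : ℕ => ((n : ℝ≥0∞) + 1) * ENNReal.ofReal (a n)) atTop ≤
        liminf (fun n : ℕ => ((n : ℝ≥0∞) + 1) * ENNReal.ofReal (b n)) atTop :=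
  ⟨limsup_le_limsup_of_shift_le_mul (tendsto_natCast_add_div_natCast_add_one k)
      fun n => natWeight_shift_le (h n),
    liminf_le_liminf_of_shift_le_mul (tendsto_natCast_add_div_natCast_add_one k)
      fun n => natWeight_shift_le (h n)⟩

theorem Delta_delta_finite_perturbation_general (x y a b : ℕ → ℝ)
    (hdiff : {n : ℕ | x n ≠ y n}.Finite)
    (ha_nonneg : ∀ n, 0 ≤ a n) (ha_mono : Antitone a)
    (hrearr_a : ∀ ε : ℝ, 0 < ε →
      {n : ℕ | ε < |x n|}.encard = {n : ℕ | ε < a n}.encard)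
    (hb_nonneg : ∀ n, 0 ≤ b n) (hb_mono : Antitone b)
    (hrearr_b : ∀ ε : ℝ, 0 < ε →
      {n : ℕ | ε < |y n|}.encard = {n : ℕ | ε < b n}.encard) :
    limsup (fun n : ℕ => ((n : ℝ≥0∞) + 1) * ENNReal.ofReal (a n)) atTop =
        limsup (fun n : ℕ => ((n : ℝ≥0∞) + 1) * ENNReal.ofReal (b n)) atTop ∧
      liminf (fun n : ℕ => ((n : ℝ≥0∞) + 1) * ENNReal.ofReal (a n)) atTop =
        liminf (fun n : ℕ => ((n : ℝ≥0∞) + 1) * ENNReal.ofReal (b n)) atTop := by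
  set s := {n : ℕ | x n ≠ y n}
  have hxy : EqOn x y sᶜ := fun _ hn => not_not.mp hn
  have hs : s.encard = s.ncard := hdiff.cast_ncard_eq.symm
  have hab : ∀ n, a (n + s.ncard) ≤ b n :=
    ha_mono.le_of_encard_setOf_lt_le_add hb_mono hb_nonneg fun ε hε => by
      rw [← hrearr_a ε hε, ← hrearr_b ε hε, ← hs]
      exact encard_setOf_le_encard_add_of_eqOn_compl hxy (ε < |·|)
  have hba : ∀ n, b (n + s.ncard) ≤ a n :=
    hb_mono.le_of_encard_setOf_lt_le_add ha_mono ha_nonneg fun ε hε => by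
      rw [← hrearr_a ε hε, ← hrearr_b ε hε, ← hs]
      exact encard_setOf_le_encard_add_of_eqOn_compl hxy.symm (ε < |·|)
  obtain ⟨hsup_ab, hinf_ab⟩ := limsup_liminf_natWeight_le_of_shift_le _ hab
  obtain ⟨hsup_ba, hinf_ba⟩ := limsup_liminf_natWeight_le_of_shift_le _ hba
  exact ⟨hsup_ab.antisymm hsup_ba, hinf_ab.antisymm hinf_ba⟩

/-- The functionals `Δ₁(x) = limsup n·x*_n` and `δ₁(x) = liminf n·x*_n` are unchanged by
modifying finitely many terms: if sequences `x` and `y` (both tending to `0`) differ in only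
finitely many entries, and `a`, `b` are the non-increasing rearrangements of `(|x_n|)`,
`(|y_n|)` respectively, then `limsup n·a_n = limsup n·b_n` and `liminf n·a_n = liminf n·b_n`. -/
theorem Delta_delta_finite_perturbation (x y a b : ℕ → ℝ)
    (hx : Tendsto x atTop (nhds (0 : ℝ))) (hy : Tendsto y atTop (nhds (0 : ℝ)))
    (hdiff : {n : ℕ | x n ≠ y n}.Finite)
    (ha_nonneg : ∀ n, 0 ≤ a n) (ha_mono : Antitone a)
    (hrearr_a : ∀ ε : ℝ, 0 < ε →
      {n : ℕ | ε < |x n|}.encard = {n : ℕ | ε < a n}.encard)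
    (hb_nonneg : ∀ n, 0 ≤ b n) (hb_mono : Antitone b)
    (hrearr_b : ∀ ε : ℝ, 0 < ε →
      {n : ℕ | ε < |y n|}.encard = {n : ℕ | ε < b n}.encard) :
    limsup (fun n : ℕ => ((n : ℝ≥0∞) + 1) * ENNReal.ofReal (a n)) atTop =
        limsup (fun n : ℕ => ((n : ℝ≥0∞) + 1) * ENNReal.ofReal (b n)) atTop ∧
      liminf (fun n : ℕ => ((n : ℝ≥0∞) + 1) * ENNReal.ofReal (a n)) atTop =
        liminf (fun n : ℕ => ((n : ℝ≥0∞) + 1) * ENNReal.ofReal (b n)) atTop :=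
  Delta_delta_finite_perturbation_general x y a b hdiff ha_nonneg ha_mono hrearr_a hb_nonneg hb_mono
    hrearr_b
end

section
/- For the explicit potential F(r) = r^{-2} (ln r)^{-2} (ln ln r)^{-1} for r > e^{e²} and F(r) = 0 otherwise, the auxiliary potential satisfies G_F(t) = t^{-2}(ln t)^{-1} for t > e², and the sequence entries ẑ_k(G_F) = ∫_{e^{k-1}}^{e^k} |t| G_F(t) dt = ln(k/(k-1)) for all sufficiently large k; in particular ẑ_k(G_F) ~ 1/k, so ẑ(G_F) ∈ ℓ_{1,∞} but ẑ(G_F) ∉ ℓ°_{1,∞} (since limsup_k k·ẑ_k = 1 > 0). -/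
open Set Filter Topology MeasureTheory ENNReal

/-- The explicit potential `F(r) = r^{-2} (ln r)^{-2} (ln ln r)^{-1}` for `r > e^{e²}`,
and `F(r) = 0` otherwise. -/
noncomputable def Fex (r : ℝ) : ℝ :=
  if Real.exp (Real.exp 2) < r then (r ^ 2 * Real.log r ^ 2 * Real.log (Real.log r))⁻¹ else 0

/-- The auxiliary one-dimensional potential `G_F(t) = e^{2|t|} F(e^t)`. -/
noncomputable def Gex (t : ℝ) : ℝ := Real.exp (2 * |t|) * Fex (Real.exp t)

/-- The sequence `ẑ(G)`: `ẑ_0(G) = ∫_{-1}^1 G(t) dt` and, for `k ≥ 1`,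
`ẑ_k(G) = ∫_{e^{k-1}<|t|<e^k} |t| G(t) dt`. -/
noncomputable def zhat (G : ℝ → ℝ) : ℕ → ℝ≥0∞
  | 0 => ∫⁻ t in Set.Ioo (-1 : ℝ) 1, ENNReal.ofReal (G t)
  | (k + 1) =>
    ∫⁻ t in {t : ℝ | Real.exp (k : ℝ) < |t| ∧ |t| < Real.exp ((k : ℝ) + 1)},
      ENNReal.ofReal (|t| * G t)

/-!
For `t > e²` the weight `|t| G_F(t) = (t log t)⁻¹` is the derivative of `log (log t)`, so
`ẑ_k = log k - log (k - 1)`. The elementary bounds `1/k ≤ log (k/(k-1)) ≤ 1/(k-1)` sandwich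
`ẑ_k` between `1/k` and `2/k`: the upper bound caps `ε · #{k : ẑ_k > ε}` by `2`, while the
lower bound keeps it above `1 - 3ε`, so it cannot tend to `0`.
-/

open Real

lemma Real.inv_le_log_div_sub_one {x : ℝ} (hx : 1 < x) : x⁻¹ ≤ Real.log (x / (x - 1)) := by
  have hx1 : 0 < x - 1 := by linarith
  have h := one_sub_inv_le_log_of_pos (div_pos (zero_lt_one.trans hx) hx1)
  have hrw : 1 - (x / (x - 1))⁻¹ = x⁻¹ := by field_simp; ring
  rwa [hrw] at h

lemma Real.log_div_sub_one_le_inv {x : ℝ} (hx : 1 < x) : Real.log (x / (x - 1)) ≤ (x - 1)⁻¹ := by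
  have hx1 : 0 < x - 1 := by linarith
  have h := log_le_sub_one_of_pos (div_pos (zero_lt_one.trans hx) hx1)
  have hrw : x / (x - 1) - 1 = (x - 1)⁻¹ := by field_simp; ring
  rwa [hrw] at h

lemma tendsto_natCast_mul_log_div_sub_one :
    Tendsto (fun k : ℕ ↦ (k : ℝ) * Real.log (k / (k - 1))) atTop (𝓝 1) := by
  have hupper : Tendsto (fun k : ℕ ↦ (k : ℝ) / (k - 1)) atTop (𝓝 1) := by
    simpa [← sub_eq_add_neg] using tendsto_natCast_div_add_atTop (-1 : ℝ)
  refine tendsto_of_tendsto_of_tendsto_of_le_of_le' tendsto_const_nhds hupper ?_ ?_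
  all_goals filter_upwards [eventually_gt_atTop 1] with k hk
  all_goals have hk' : (1 : ℝ) < k := by exact_mod_cast hk
  · have h := mul_le_mul_of_nonneg_left (inv_le_log_div_sub_one hk') (by linarith : (0 : ℝ) ≤ k)
    rwa [mul_inv_cancel₀ (by linarith)] at h
  · have h := mul_le_mul_of_nonneg_left (log_div_sub_one_le_inv hk') (by linarith : (0 : ℝ) ≤ k)
    rwa [← div_eq_mul_inv] at h

lemma setLIntegral_Ioo_inv_mul_log {a b : ℝ} (ha : 1 < a) (hab : a ≤ b) :
    ∫⁻ t in Ioo a b, ENNReal.ofReal ((t * Real.log t)⁻¹) =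
      ENNReal.ofReal (Real.log (Real.log b) - Real.log (Real.log a)) := by
  have hpos : ∀ t ∈ Icc a b, 0 < t⁻¹ / Real.log t := fun t ht ↦
    div_pos (inv_pos.2 (by linarith [ht.1])) (log_pos (ha.trans_le ht.1))
  have hcont : ContinuousOn (fun t ↦ t⁻¹ / Real.log t) (Icc a b) := by
    refine (continuousOn_inv₀.mono fun t ht ↦ ?_).div (continuousOn_log.mono fun t ht ↦ ?_)
      fun t ht ↦ (log_pos (ha.trans_le ht.1)).ne'
    all_goals exact (show t ≠ 0 by linarith [ht.1])
  have hint : IntegrableOn (fun t ↦ t⁻¹ / Real.log t) (Ioo a b) :=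
    hcont.integrableOn_Icc.mono_set Ioo_subset_Icc_self
  have hnonneg : 0 ≤ᵐ[volume.restrict (Ioo a b)] fun t ↦ t⁻¹ / Real.log t :=
    (ae_restrict_iff' measurableSet_Ioo).2 <| ae_of_all _ fun t ht ↦
      (hpos t (Ioo_subset_Icc_self ht)).le
  simp_rw [mul_inv, ← div_eq_mul_inv]
  rw [← ofReal_integral_eq_lintegral_ofReal hint hnonneg, ← integral_Ioc_eq_integral_Ioo,
    ← intervalIntegral.integral_of_le hab, integral_inv_div_log ha (ha.trans_le hab)]

lemma zhat_succ_eq_setLIntegral_Ioo {G : ℝ → ℝ} (hG : ∀ t ≤ 0, G t = 0) (k : ℕ) :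
    zhat G (k + 1) = ∫⁻ t in Ioo (exp k) (exp (k + 1)), ENNReal.ofReal (t * G t) := by
  set S := {t : ℝ | exp k < |t| ∧ |t| < exp (k + 1)}
  have hsupp : (fun t ↦ ENNReal.ofReal (|t| * G t)).support ⊆ Ioi 0 :=
    Function.support_subset_iff'.2 fun t ht ↦ by simp [hG t (not_lt.1 ht)]
  have hS : Ioi 0 ∩ S = Ioo (exp k) (exp (k + 1)) := by
    ext t
    constructor
    · rintro ⟨ht, hk, hk'⟩
      rw [abs_of_pos ht] at hk hk'
      exact ⟨hk, hk'⟩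
    · rintro ⟨hk, hk'⟩
      have ht : 0 < t := (exp_pos _).trans hk
      exact ⟨ht, by rwa [abs_of_pos ht], by rwa [abs_of_pos ht]⟩
  calc zhat G (k + 1) = ∫⁻ t in Ioi 0, ENNReal.ofReal (|t| * G t) ∂volume.restrict S :=
        (setLIntegral_eq_of_support_subset hsupp).symm
    _ = ∫⁻ t in Ioo (exp k) (exp (k + 1)), ENNReal.ofReal (|t| * G t) := by
        rw [Measure.restrict_restrict measurableSet_Ioi, hS]
    _ = _ := setLIntegral_congr_fun measurableSet_Ioo fun t ht ↦ by
        rw [abs_of_pos ((exp_pos _).trans ht.1)]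

/-- `ε · #{k : z_k > ε}`: `ℓ_{1,∞}` asks it to be bounded over `ε > 0`, `ℓ°_{1,∞}` to vanish as
`ε → 0⁺`. -/
noncomputable def weakL1Dist (z : ℕ → ℝ≥0∞) (ε : ℝ) : ℝ≥0∞ :=
  ENNReal.ofReal ε * ({k : ℕ | ENNReal.ofReal ε < z k}.encard : ℝ≥0∞)

section WeakL1

variable {z : ℕ → ℝ≥0∞} {c ε : ℝ}

lemma weakL1Dist_le_of_le_div (hc : 0 ≤ c) (hz0 : z 0 = 0)
    (hz : ∀ k, 0 < k → z k ≤ ENNReal.ofReal (c / k)) (hε : 0 < ε) :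
    weakL1Dist z ε ≤ ENNReal.ofReal c := by
  have hsub : {k : ℕ | ENNReal.ofReal ε < z k} ⊆ ↑(Finset.Icc 1 ⌊c / ε⌋₊) := by
    intro k hk
    have hk0 : 0 < k := Nat.pos_of_ne_zero fun h ↦ by simp [h, hz0] at hk
    have hkc : ε < c / k := (ENNReal.ofReal_lt_ofReal_iff'.1 (hk.trans_le (hz k hk0))).1
    have hk0' : (0 : ℝ) < k := by exact_mod_cast hk0
    rw [lt_div_iff₀ hk0', mul_comm, ← lt_div_iff₀ hε] at hkc
    exact Finset.mem_Icc.2 ⟨hk0, Nat.le_floor hkc.le⟩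
  have hcard : ({k : ℕ | ENNReal.ofReal ε < z k}.encard : ℝ≥0∞) ≤ (⌊c / ε⌋₊ : ℝ≥0∞) := by
    have h := Set.encard_le_encard hsub
    rw [Set.encard_coe_eq_coe_finsetCard, Nat.card_Icc, Nat.add_sub_cancel] at h
    exact_mod_cast ENat.toENNReal_mono h
  calc weakL1Dist z ε ≤ ENNReal.ofReal ε * (⌊c / ε⌋₊ : ℝ≥0∞) := mul_le_mul_right hcard _
    _ = ENNReal.ofReal (ε * ⌊c / ε⌋₊) := by
        rw [← ENNReal.ofReal_natCast, ← ENNReal.ofReal_mul hε.le]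
    _ ≤ ENNReal.ofReal c := by
        refine ENNReal.ofReal_le_ofReal ?_
        have h := mul_le_mul_of_nonneg_left (Nat.floor_le (div_nonneg hc hε.le)) hε.le
        rwa [mul_div_cancel₀ c hε.ne'] at h

lemma ofReal_sub_le_weakL1Dist {K : ℕ} (hz : ∀ k, K < k → ENNReal.ofReal (c / k) ≤ z k)
    (hε : 0 < ε) : ENNReal.ofReal (c - (K + 1) * ε) ≤ weakL1Dist z ε := by
  set n := ⌈c / ε⌉₊
  have hsub : ↑(Finset.Ioo K n) ⊆ {k : ℕ | ENNReal.ofReal ε < z k} := by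
    intro k hk
    obtain ⟨hKk, hkn⟩ := Finset.mem_Ioo.1 hk
    have hk0 : (0 : ℝ) < k := by exact_mod_cast (show 0 < k by omega)
    have hkc : ε < c / k := by
      rw [lt_div_iff₀ hk0, mul_comm, ← lt_div_iff₀ hε]
      exact Nat.lt_ceil.1 hkn
    exact (ENNReal.ofReal_lt_ofReal_iff (hε.trans hkc)).2 hkc |>.trans_le (hz k hKk)
  have hcard : ((Finset.Ioo K n).card : ℝ≥0∞) ≤
      ({k : ℕ | ENNReal.ofReal ε < z k}.encard : ℝ≥0∞) := by
    have h := Set.encard_le_encard hsub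
    rw [Set.encard_coe_eq_coe_finsetCard] at h
    exact_mod_cast ENat.toENNReal_mono h
  have hn : (n : ℝ) ≤ (Finset.Ioo K n).card + (K + 1) := by
    have : n ≤ (Finset.Ioo K n).card + (K + 1) := by rw [Nat.card_Ioo]; omega
    exact_mod_cast this
  calc ENNReal.ofReal (c - (K + 1) * ε)
      ≤ ENNReal.ofReal (ε * (Finset.Ioo K n).card) := by
        refine ENNReal.ofReal_le_ofReal ?_
        have h := mul_le_mul_of_nonneg_left ((Nat.le_ceil (c / ε)).trans hn) hε.le
        rw [mul_div_cancel₀ c hε.ne'] at h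
        linarith
    _ = ENNReal.ofReal ε * ((Finset.Ioo K n).card : ℝ≥0∞) := by
        rw [ENNReal.ofReal_mul hε.le, ENNReal.ofReal_natCast]
    _ ≤ weakL1Dist z ε := mul_le_mul_right hcard _

lemma not_tendsto_weakL1Dist_zero (hc : 0 < c) {K : ℕ}
    (hz : ∀ k, K < k → ENNReal.ofReal (c / k) ≤ z k) :
    ¬ Tendsto (weakL1Dist z) (𝓝[>] 0) (𝓝 0) := by
  intro h
  have hlower : Tendsto (fun ε : ℝ ↦ ENNReal.ofReal (c - (K + 1) * ε)) (𝓝[>] 0)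
      (𝓝 (ENNReal.ofReal c)) := by
    have : Tendsto (fun ε : ℝ ↦ c - (K + 1) * ε) (𝓝 0) (𝓝 c) := by
      simpa using (tendsto_id (x := 𝓝 (0 : ℝ))).const_mul ((K : ℝ) + 1) |>.const_sub c
    exact (ENNReal.tendsto_ofReal this).mono_left nhdsWithin_le_nhds
  have hle := le_of_tendsto_of_tendsto hlower h <|
    eventually_nhdsWithin_of_forall fun ε hε ↦ ofReal_sub_le_weakL1Dist hz hε
  exact (ENNReal.ofReal_pos.2 hc).ne' (nonpos_iff_eq_zero.1 hle)

end WeakL1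

lemma Gex_of_le {t : ℝ} (h : t ≤ exp 2) : Gex t = 0 := by
  rw [Gex, Fex, if_neg (by simpa using exp_le_exp.2 h), mul_zero]

lemma Gex_of_gt {t : ℝ} (h : exp 2 < t) : Gex t = (t ^ 2 * Real.log t)⁻¹ := by
  have ht : 0 < t := (exp_pos 2).trans h
  have hlog : 0 < Real.log t := log_pos ((one_lt_exp_iff.2 two_pos).trans h)
  have hexp : exp t ^ 2 = exp (2 * t) := by rw [← exp_nat_mul]; norm_num
  rw [Gex, Fex, if_pos (exp_lt_exp.2 h), abs_of_pos ht, log_exp, hexp]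
  field_simp

lemma zhat_Gex_of_le_two {k : ℕ} (hk : k ≤ 2) : zhat Gex k = 0 := by
  rcases k with _ | k
  · refine (setLIntegral_congr_fun measurableSet_Ioo fun t ht ↦ ?_).trans lintegral_zero
    have : t ≤ exp 2 := ht.2.le.trans (one_lt_exp_iff.2 two_pos).le
    rw [Gex_of_le this, ENNReal.ofReal_zero]
  · rw [zhat_succ_eq_setLIntegral_Ioo fun t ht ↦ Gex_of_le (ht.trans (exp_pos 2).le)]
    refine (setLIntegral_congr_fun measurableSet_Ioo fun t ht ↦ ?_).trans lintegral_zero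
    have hk2 : (k : ℝ) + 1 ≤ 2 := by exact_mod_cast hk
    rw [Gex_of_le (ht.2.le.trans (exp_le_exp.2 hk2)), mul_zero, ENNReal.ofReal_zero]

lemma zhat_Gex_of_three_le {k : ℕ} (hk : 3 ≤ k) :
    zhat Gex k = ENNReal.ofReal (Real.log ((k : ℝ) / ((k : ℝ) - 1))) := by
  obtain ⟨m, rfl⟩ : ∃ m, k = m + 1 := ⟨k - 1, by omega⟩
  have hm : (2 : ℝ) ≤ m := by exact_mod_cast (show 2 ≤ m by omega)
  rw [zhat_succ_eq_setLIntegral_Ioo fun t ht ↦ Gex_of_le (ht.trans (exp_pos 2).le)]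
  have hweight : ∀ t ∈ Ioo (exp m) (exp (m + 1)),
      ENNReal.ofReal (t * Gex t) = ENNReal.ofReal ((t * Real.log t)⁻¹) := fun t ht ↦ by
    have h2t : exp 2 < t := (exp_le_exp.2 hm).trans_lt ht.1
    have hlog : 0 < Real.log t := log_pos ((one_lt_exp_iff.2 two_pos).trans h2t)
    rw [Gex_of_gt h2t]
    field_simp
  rw [setLIntegral_congr_fun measurableSet_Ioo hweight,
    setLIntegral_Ioo_inv_mul_log (one_lt_exp_iff.2 (by linarith))
      (exp_le_exp.2 (by linarith)),
    log_exp, log_exp, ← log_div (by positivity) (by positivity)]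
  push_cast
  ring_nf

lemma zhat_Gex_le (k : ℕ) : zhat Gex k ≤ ENNReal.ofReal (2 / k) := by
  rcases le_or_gt k 2 with hk2 | hk3
  · simp [zhat_Gex_of_le_two hk2]
  rw [zhat_Gex_of_three_le hk3]
  have hk3' : (3 : ℝ) ≤ k := by exact_mod_cast hk3
  refine ENNReal.ofReal_le_ofReal ((log_div_sub_one_le_inv (by linarith)).trans ?_)
  rw [inv_eq_one_div, div_le_div_iff₀ (by linarith) (by linarith)]
  linarith

lemma ofReal_inv_le_zhat_Gex {k : ℕ} (hk : 3 ≤ k) : ENNReal.ofReal (1 / k) ≤ zhat Gex k := by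
  have hk' : (1 : ℝ) < k := by exact_mod_cast (show 1 < k by omega)
  rw [zhat_Gex_of_three_le hk, one_div]
  exact ENNReal.ofReal_le_ofReal (inv_le_log_div_sub_one hk')

lemma tendsto_natCast_mul_zhat_Gex :
    Tendsto (fun k : ℕ ↦ (k : ℝ≥0∞) * zhat Gex k) atTop (𝓝 1) := by
  have heq : (fun k : ℕ ↦ ENNReal.ofReal ((k : ℝ) * Real.log (k / (k - 1))))
      =ᶠ[atTop] fun k : ℕ ↦ (k : ℝ≥0∞) * zhat Gex k := by
    filter_upwards [eventually_ge_atTop 3] with k hk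
    rw [zhat_Gex_of_three_le hk, ENNReal.ofReal_mul (Nat.cast_nonneg k), ENNReal.ofReal_natCast]
  rw [← ENNReal.ofReal_one]
  exact (ENNReal.tendsto_ofReal tendsto_natCast_mul_log_div_sub_one).congr' heq

/-- For the explicit potential `Fex`: `G_F(t) = t^{-2} (ln t)^{-1}` for `t > e²`;
`ẑ_k(G_F) = ln(k/(k-1))` for all large `k`; `ẑ_k ~ 1/k`, i.e. `limsup_k k·ẑ_k = 1 > 0`;
hence `ẑ(G_F) ∈ ℓ_{1,∞}` (the weak-ℓ1 distribution functional is finite) but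
`ẑ(G_F) ∉ ℓ°_{1,∞}` (it does not tend to `0`). -/
theorem explicit_potential_weakL1_not_circ :
    (∀ t : ℝ, Real.exp 2 < t → Gex t = (t ^ 2 * Real.log t)⁻¹) ∧
      (∃ K : ℕ, ∀ k : ℕ, K ≤ k →
        zhat Gex k = ENNReal.ofReal (Real.log ((k : ℝ) / ((k : ℝ) - 1)))) ∧
      Filter.limsup (fun k : ℕ => (k : ℝ≥0∞) * zhat Gex k) atTop = 1 ∧
      (⨆ ε : {ε : ℝ // 0 < ε}, ENNReal.ofReal ε.1 *
          ({k : ℕ | ENNReal.ofReal ε.1 < zhat Gex k}.encard : ℝ≥0∞)) < ⊤ ∧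
      ¬ Tendsto (fun ε : ℝ => ENNReal.ofReal ε *
            ({k : ℕ | ENNReal.ofReal ε < zhat Gex k}.encard : ℝ≥0∞))
          (nhdsWithin 0 (Set.Ioi 0)) (nhds 0) := by
  refine ⟨fun t ↦ Gex_of_gt, ⟨3, fun k ↦ zhat_Gex_of_three_le⟩,
    tendsto_natCast_mul_zhat_Gex.limsup_eq, ?_, ?_⟩
  · have hbound (ε : {ε : ℝ // 0 < ε}) : weakL1Dist (zhat Gex) ε.1 ≤ ENNReal.ofReal 2 :=
      weakL1Dist_le_of_le_div zero_le_two (zhat_Gex_of_le_two (by norm_num))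
        (fun k _ ↦ zhat_Gex_le k) ε.2
    exact (iSup_le hbound).trans_lt ENNReal.ofReal_lt_top
  · exact not_tendsto_weakL1Dist_zero one_pos (K := 2) fun k ↦ ofReal_inv_le_zhat_Gex
end
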